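/- Let L be a finite lattice and A a lattice-antichain for L. To verify the lattice-antichain condition, it suffices to check a ⊓ b ∈ ↑A for those pairs (a,b) that are minimal, with respect to the product order on L × L, in the set {(a,b) ∈ ↑A × ↑A : a ⊓ b ≠ 0}. -/

import Mathlib

/-!
A pair `(a, b)` of elements of `↑A` with `a ⊓ b ≠ 0` lies above a minimal such pair `(a', b')`
(the lattice is finite). If `a' ⊓ b' ∈ ↑A`, then so is `a ⊓ b ≥ a' ⊓ b'`, as `↑A` is an up-set.
-/

namespace PaperLattice

variable {N : ℕ}

/-- Depth: one less than the maximum length of a chain from `t` down to `a` w.r.t. `le`. -/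
noncomputable def dep (le : Fin N → Fin N → Prop) (t a : Fin N) : ℕ :=
  sSup {k | ∃ l : List (Fin N), List.Chain' (fun x y => le y x ∧ y ≠ x) l ∧
    l.head? = some t ∧ l.getLast? = some a ∧ l.length = k + 1}

/-- The `d`-th level: elements of depth `d`. -/
noncomputable def lev (le : Fin N → Fin N → Prop) (t : Fin N) (d : ℕ) : Set (Fin N) :=
  {a | dep le t a = d}

/-- A labelled poset is levellised if depth is monotone in the nonzero labels. -/
def Levellised (le : Fin N → Fin N → Prop) (t : Fin N) : Prop :=
  ∀ i j : Fin N, 0 < (i : ℕ) → (i : ℕ) ≤ (j : ℕ) → dep le t i ≤ dep le t j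

def lt' (le : Fin N → Fin N → Prop) (a b : Fin N) : Prop := le a b ∧ a ≠ b

/-- `b` covers `a`. -/
def CovByRel (le : Fin N → Fin N → Prop) (a b : Fin N) : Prop :=
  lt' le a b ∧ ∀ x, lt' le a x → lt' le x b → False

/-- The covering set of `a`. -/
def cov (le : Fin N → Fin N → Prop) (a : Fin N) : Set (Fin N) := {b | CovByRel le a b}

/-- The up-set of `A`. -/
def upset (le : Fin N → Fin N → Prop) (A : Set (Fin N)) : Set (Fin N) :=
  {x | ∃ a ∈ A, le a x}

def AntichainRel (le : Fin N → Fin N → Prop) (A : Set (Fin N)) : Prop :=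
  ∀ a ∈ A, ∀ b ∈ A, a ≠ b → ¬ le a b

/-- Binary weight of a set of labels. -/
noncomputable def wt (A : Set (Fin N)) : ℕ :=
  ∑ j : Fin N, A.indicator (fun j => 2 ^ (j : ℕ)) j

/-- `z` is a bottom and `o` a top for `le`. -/
def Bounds (le : Fin N → Fin N → Prop) (z o : Fin N) : Prop :=
  (∀ a, le z a) ∧ (∀ a, le a o)

/-- The order obtained from `le` by adding `m` new atoms, the `i`-th having covering set `A i`. -/
def extLe {n m : ℕ} (le : Fin n → Fin n → Prop) (A : Fin m → Set (Fin n)) :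
    Fin (n + m) → Fin (n + m) → Prop := fun x y =>
  if hx : (x : ℕ) < n then
    if hy : (y : ℕ) < n then le ⟨x, hx⟩ ⟨y, hy⟩
    else (x : ℕ) = 0
  else
    if hy : (y : ℕ) < n then
      (⟨y, hy⟩ : Fin n) ∈ upset le (A ⟨(x : ℕ) - n, by have := x.isLt; omega⟩)
    else x = y

/-- The relabelled order `π(L)`. -/
def permLe {n : ℕ} (π : Equiv.Perm (Fin n)) (le : Fin n → Fin n → Prop) :
    Fin n → Fin n → Prop := fun a b => le (π.symm a) (π.symm b)

section Minimal

variable {β γ : Type*} [Preorder β] [Preorder γ]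

theorem forall_mem_iff_forall_minimal [WellFoundedLT β] {P : β → Prop} {f : β → γ}
    (hf : Monotone f) {U : Set γ} (hU : IsUpperSet U) :
    (∀ p, P p → f p ∈ U) ↔ ∀ p, Minimal P p → f p ∈ U := by
  refine ⟨fun h p hp => h p hp.prop, fun h p hp => ?_⟩
  obtain ⟨m, hmp, hm⟩ := exists_minimal_le_of_wellFoundedLT P p hp
  exact hU (hf hmp) (h m hm)

theorem minimal_prod_iff {α : Type*} [PartialOrder α] {S : Set (α × α)} {p : α × α} :
    Minimal (· ∈ S) p ↔ p ∈ S ∧ ∀ q ∈ S, q.1 ≤ p.1 → q.2 ≤ p.2 → q = p := by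
  simp only [minimal_iff, Prod.le_def, and_imp, eq_comm (a := p)]

end Minimal

def meetPairs {α : Type*} [Lattice α] (U : Set α) (z : α) : Set (α × α) :=
  {q | q.1 ∈ U ∧ q.2 ∈ U ∧ q.1 ⊓ q.2 ≠ z}

theorem forall_inf_mem_iff_forall_minimal_meetPairs {α : Type*} [Lattice α] [Finite α]
    {U : Set α} (hU : IsUpperSet U) (z : α) :
    (∀ a ∈ U, ∀ b ∈ U, a ⊓ b = z ∨ a ⊓ b ∈ U) ↔
      ∀ p : α × α, p ∈ meetPairs U z →
        (∀ q ∈ meetPairs U z, q.1 ≤ p.1 → q.2 ≤ p.2 → q = p) → p.1 ⊓ p.2 ∈ U := by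
  have hmono : Monotone fun p : α × α => p.1 ⊓ p.2 := monotone_fst.inf monotone_snd
  have hpairs : (∀ a ∈ U, ∀ b ∈ U, a ⊓ b = z ∨ a ⊓ b ∈ U) ↔
      ∀ p ∈ meetPairs U z, p.1 ⊓ p.2 ∈ U :=
    ⟨fun h p ⟨h1, h2, hz⟩ => (h _ h1 _ h2).resolve_left hz,
      fun h a ha b hb => or_iff_not_imp_left.2 fun hz => h (a, b) ⟨ha, hb, hz⟩⟩
  rw [hpairs, forall_mem_iff_forall_minimal hmono hU]
  simp only [minimal_prod_iff, and_imp]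

theorem isUpperSet_upset (L : Lattice (Fin N)) (A : Set (Fin N)) :
    @IsUpperSet (Fin N) L.toLE (upset L.le A) :=
  fun _ _ hxy ⟨a, ha, hax⟩ => ⟨a, ha, L.le_trans _ _ _ hax hxy⟩

/-- the lattice-antichain condition need only be checked on pairs that are
minimal (for the product order) in `{(a,b) ∈ ↑A × ↑A : a ⊓ b ≠ 0}`. -/
theorem statement1 {n : ℕ} (hn : 2 ≤ n) (L : Lattice (Fin n))
    (A : Set (Fin n)) :
    (∀ a ∈ upset L.le A, ∀ b ∈ upset L.le A,
        L.inf a b = ⟨0, by omega⟩ ∨ L.inf a b ∈ upset L.le A) ↔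
      ∀ p : Fin n × Fin n,
        p ∈ {q : Fin n × Fin n | q.1 ∈ upset L.le A ∧ q.2 ∈ upset L.le A ∧
              L.inf q.1 q.2 ≠ ⟨0, by omega⟩} →
        (∀ q ∈ {q : Fin n × Fin n | q.1 ∈ upset L.le A ∧ q.2 ∈ upset L.le A ∧
              L.inf q.1 q.2 ≠ ⟨0, by omega⟩}, L.le q.1 p.1 → L.le q.2 p.2 → q = p) →
        L.inf p.1 p.2 ∈ upset L.le A :=
  -- `L` is not the order instance of `Fin n`, so it is passed explicitly.
  @forall_inf_mem_iff_forall_minimal_meetPairs (Fin n) L _ _ (isUpperSet_upset L A) _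

end PaperLattice
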